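/- arXiv:1804.07952 — 3 statements merged into one kernel-verified Lean document; each statement's English description precedes it below -/
import Mathlib

section
/- There exists a functional Θ that, given any g : (ℕ → ℕ) → ℕ, returns a finite list of binary sequences f₀,…,fₙ ∈ 2^ℕ and a number k such that the basic open neighbourhoods determined by the initial segments f̄ᵢ(g(fᵢ)) cover Cantor space 2^ℕ, and k bounds all the values g(fᵢ); equivalently, for every binary tree T, if no fᵢ has its initial segment of length g(fᵢ) in T, then every binary sequence β has some initial segment of length ≤ k not in T. -/
/-- The initial segment `⟨f 0, …, f (n-1)⟩` of `f` of length `n`. -/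
def seg (f : ℕ → ℕ) (n : ℕ) : List ℕ := (List.range n).map f

/-- `T` is a binary tree: all entries are bits and `T` is closed under initial segments. -/
def IsBinaryTree (T : Set (List ℕ)) : Prop :=
  (∀ σ ∈ T, ∀ m ∈ σ, m ≤ 1) ∧ ∀ σ ∈ T, ∀ n, σ.take n ∈ T

theorem seg_eq_seg_iff {β f : ℕ → ℕ} {n : ℕ} : seg β n = seg f n ↔ ∀ i < n, β i = f i := by
  simp only [seg, List.map_inj_left, List.mem_range]

theorem isCompact_binarySeqs : IsCompact {f : ℕ → ℕ | ∀ n, f n ≤ 1} := by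
  simpa only [Set.pi, Set.mem_univ, true_implies, Set.mem_Iic] using
    isCompact_univ_pi fun _ : ℕ => (Set.finite_Iic 1).isCompact

open Topology in
theorem setOf_seg_eq_mem_nhds (f : ℕ → ℕ) (n : ℕ) : {β | seg β n = seg f n} ∈ 𝓝 f := by
  simp only [seg_eq_seg_iff, ← Finset.mem_range]
  exact (Finset.range n).eventually_all.2 fun i _ =>
    (continuous_apply i).continuousAt.eventually_mem (isOpen_discrete {f i} |>.mem_nhds rfl)

/-- `g` need not be continuous: each `f` just picks the neighbourhood of radius `g f`. -/
theorem exists_finset_binary_seg_cover (g : (ℕ → ℕ) → ℕ) :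
    ∃ t : Finset (ℕ → ℕ), (∀ f ∈ t, ∀ n, f n ≤ 1) ∧
      ∀ β : ℕ → ℕ, (∀ n, β n ≤ 1) → ∃ f ∈ t, seg β (g f) = seg f (g f) := by
  obtain ⟨t, ht_bin, ht_cover⟩ := isCompact_binarySeqs.elim_nhds_subcover
    (fun f => {β | seg β (g f) = seg f (g f)}) fun f _ => setOf_seg_eq_mem_nhds f (g f)
  refine ⟨t, ht_bin, fun β hβ => ?_⟩
  simpa only [Set.mem_iUnion, Set.mem_ofPred_eq, exists_prop] using ht_cover hβ

/-- Existence of a special fan functional `Θ` satisfying `SCF(Θ)`: for each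
`g`, `Θ g` consists of a finite list of binary sequences whose neighbourhoods
`[f̄ᵢ (g fᵢ)]` cover Cantor space, together with a bound `k` on the values `g fᵢ`;
equivalently, for every binary tree `T`, if no `f̄ᵢ (g fᵢ)` lies in `T`, then every
binary `β` has an initial segment of length `≤ k` outside `T`. -/
theorem special_fan_functional_exists :
    ∃ Θ : ((ℕ → ℕ) → ℕ) → List (ℕ → ℕ) × ℕ,
      ∀ g : (ℕ → ℕ) → ℕ,
        (∀ f ∈ (Θ g).1, ∀ n, f n ≤ 1) ∧
        (∀ f ∈ (Θ g).1, g f ≤ (Θ g).2) ∧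
        (∀ β : ℕ → ℕ, (∀ n, β n ≤ 1) →
          ∃ f ∈ (Θ g).1, seg β (g f) = seg f (g f)) ∧
        (∀ T : Set (List ℕ), IsBinaryTree T →
          (∀ f ∈ (Θ g).1, seg f (g f) ∉ T) →
          ∀ β : ℕ → ℕ, (∀ n, β n ≤ 1) → ∃ i ≤ (Θ g).2, seg β i ∉ T) := by
  choose t ht_bin ht_cover using exists_finset_binary_seg_cover
  have hcover (g : (ℕ → ℕ) → ℕ) (β : ℕ → ℕ) (hβ : ∀ n, β n ≤ 1) :
      ∃ f ∈ (t g).toList, seg β (g f) = seg f (g f) := by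
    simpa only [Finset.mem_toList] using ht_cover g β hβ
  refine ⟨fun g => ((t g).toList, (t g).sup g), fun g => ⟨?_, ?_, hcover g, ?_⟩⟩
  · simpa only [Finset.mem_toList] using ht_bin g
  · exact fun f hf => Finset.le_sup (Finset.mem_toList.1 hf)
  · intro T _ hT β hβ
    obtain ⟨f, hf, hseg⟩ := hcover g β hβ
    exact ⟨g f, Finset.le_sup (Finset.mem_toList.1 hf), hseg ▸ hT f hf⟩
end

section
/- If every function from ℕ^ℕ to ℕ is continuous, then there exists a fan functional: a map Φ sending each Y : ℕ^ℕ → ℕ to a natural number Φ(Y) such that for all f, g ∈ 2^ℕ, if f and g agree on their first Φ(Y) values then Y(f) = Y(g). -/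
open PiNat Set

lemma fan_modulus {Y : (ℕ → ℕ) → ℕ} (hY : Continuous Y) :
    ∃ N : ℕ, ∀ f g : ℕ → Fin 2, (∀ i < N, f i = g i) →
      Y (fun n => (f n : ℕ)) = Y (fun n => (g n : ℕ)) := by
  set F : (ℕ → Fin 2) → ℕ := fun f => Y (fun n => (f n : ℕ)) with hFdef
  have hF : Continuous F := by
    apply hY.comp
    exact continuous_pi fun n => Continuous.comp continuous_of_discreteTopology
      (continuous_apply n)
  -- for each f, choose a cylinder on which F is constant
  have hloc : ∀ f : ℕ → Fin 2, ∃ n : ℕ, ∀ g ∈ cylinder f n, F g = F f := by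
    intro f
    have hopen : IsOpen (F ⁻¹' {F f}) := (isOpen_discrete _).preimage hF
    obtain ⟨v, ⟨x, n, rfl⟩, hfv, hsub⟩ :=
      (isTopologicalBasis_cylinders (fun _ : ℕ => Fin 2)).exists_subset_of_mem_open
        (show f ∈ F ⁻¹' {F f} from rfl) hopen
    refine ⟨n, fun g hg => ?_⟩
    have : g ∈ cylinder x n := fun i hi => (hg i hi).trans (hfv i hi)
    simpa using hsub this
  choose N hN using hloc
  -- compactness: finitely many cylinders cover
  have hcov : (univ : Set (ℕ → Fin 2)) ⊆ ⋃ f, cylinder f (N f) := by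
    intro f _
    exact mem_iUnion.2 ⟨f, self_mem_cylinder f (N f)⟩
  obtain ⟨t, ht⟩ := isCompact_univ.elim_finite_subcover
    (fun f => cylinder f (N f)) (fun f => isOpen_cylinder _ f (N f)) hcov
  classical
  refine ⟨t.sup N, fun f g hfg => ?_⟩
  obtain ⟨f₀, hf₀t, hf₀⟩ : ∃ f₀ ∈ t, f ∈ cylinder f₀ (N f₀) := by
    simpa using ht (mem_univ f)
  have hNle : N f₀ ≤ t.sup N := Finset.le_sup hf₀t
  have hg : g ∈ cylinder f₀ (N f₀) := fun i hi =>
    ((hfg i (hi.trans_le hNle)).symm).trans (hf₀ i hi)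
  exact (hN f₀ f hf₀).trans (hN f₀ g hg).symm

/-- If every `Y : ℕ^ℕ → ℕ` is continuous, then there is a fan functional `Φ`:
for every `Y`, any two binary sequences agreeing up to `Φ Y` get the same
`Y`-value. -/
theorem fan_functional_of_all_continuous
    (hcont : ∀ Y : (ℕ → ℕ) → ℕ, Continuous Y) :
    ∃ Φ : ((ℕ → ℕ) → ℕ) → ℕ,
      ∀ Y : (ℕ → ℕ) → ℕ, ∀ f g : ℕ → ℕ, (∀ n, f n ≤ 1) → (∀ n, g n ≤ 1) →
        (∀ i < Φ Y, f i = g i) → Y f = Y g := by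
  choose Φ hΦ using fun Y => fan_modulus (hcont Y)
  refine ⟨Φ, fun Y f g hf hg hfg => ?_⟩
  set f' : ℕ → Fin 2 := fun n => ⟨f n, Nat.lt_succ_of_le (hf n)⟩
  set g' : ℕ → Fin 2 := fun n => ⟨g n, Nat.lt_succ_of_le (hg n)⟩
  have h := hΦ Y f' g' (fun i hi => by
    simp only [f', g', Fin.mk.injEq]; exact hfg i hi)
  simpa [f', g'] using h
end

section
/- There exists a weak fan functional: a map Λ assigning to each g : 2^ℕ → ℕ and k ∈ ℕ a finite list of binary sequences α₀,…,αₘ and a bound N, such that for every binary tree T ⊆ 2^{<ℕ}, if ᾱᵢ(g(αᵢ)) ∉ T for all i, then there exists n ≤ N with |{σ ∈ T : |σ| = n}| / 2^n ≤ 1/k. -/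
open PiNat

theorem exists_finset_cylinder_cover {E : ℕ → Type*} [∀ n, TopologicalSpace (E n)]
    [∀ n, DiscreteTopology (E n)] [∀ n, CompactSpace (E n)] (r : (∀ n, E n) → ℕ) :
    ∃ s : Finset (∀ n, E n), ∀ y, ∃ x ∈ s, y ∈ cylinder x (r x) := by
  obtain ⟨s, hs⟩ := isCompact_univ.elim_finite_subcover (fun x => cylinder x (r x))
    (fun x => isOpen_cylinder E x _) fun y _ => Set.mem_iUnion.2 ⟨y, self_mem_cylinder y _⟩
  exact ⟨s, fun y => by simpa using hs (Set.mem_univ y)⟩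

theorem seg_congr {α α' : ℕ → ℕ} {m : ℕ} (h : ∀ i < m, α i = α' i) : seg α m = seg α' m :=
  List.map_congr_left fun i hi => h i (List.mem_range.1 hi)

theorem seg_getD_eq_take (σ : List ℕ) {m : ℕ} (hm : m ≤ σ.length) :
    seg (fun i => σ.getD i 0) m = σ.take m :=
  List.ext_getElem (by simp [seg, hm]) fun i hi _ => by
    simp only [seg, List.length_map, List.length_range] at hi
    simp only [seg, List.getElem_map, List.getElem_range, List.getElem_take]
    exact List.getD_eq_getElem σ 0 (by omega)

def toBits (β : ℕ → Bool) : ℕ → ℕ := fun n => (β n).toNat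

def ofBits (σ : List ℕ) : ℕ → Bool := fun i => σ.getD i 0 = 1

theorem toBits_le_one (β : ℕ → Bool) (n : ℕ) : toBits β n ≤ 1 := Bool.toNat_le _

theorem toBits_ofBits {σ : List ℕ} (hσ : ∀ m ∈ σ, m ≤ 1) :
    toBits (ofBits σ) = fun i => σ.getD i 0 := by
  funext i
  have hbit : σ.getD i 0 ≤ 1 := by
    rcases lt_or_ge i σ.length with hi | hi
    · exact hσ _ (List.getD_eq_getElem σ 0 hi ▸ List.getElem_mem hi)
    · exact (List.getD_eq_default σ 0 hi).trans_le zero_le_one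
  change (decide (σ.getD i 0 = 1)).toNat = σ.getD i 0
  rcases Nat.le_one_iff_eq_zero_or_eq_one.1 hbit with h | h <;> rw [h] <;> rfl

theorem IsBinaryTree.length_lt_of_cylinder_cover {T : Set (List ℕ)} (hT : IsBinaryTree T)
    {s : Finset (ℕ → Bool)} {r : (ℕ → Bool) → ℕ} (hcover : ∀ y, ∃ x ∈ s, y ∈ cylinder x (r x))
    (havoid : ∀ x ∈ s, seg (toBits x) (r x) ∉ T) {σ : List ℕ} (hσ : σ ∈ T) :
    σ.length < s.sup r := by
  by_contra! hlen
  obtain ⟨x, hxs, hx⟩ := hcover (ofBits σ)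
  have hstem : seg (toBits x) (r x) = σ.take (r x) := by
    have hagree : ∀ i < r x, toBits x i = toBits (ofBits σ) i := fun i hi =>
      congrArg Bool.toNat (mem_cylinder_iff.1 hx i hi).symm
    rw [seg_congr hagree, toBits_ofBits (hT.1 σ hσ), seg_getD_eq_take σ ((Finset.le_sup hxs).trans hlen)]
  exact havoid x hxs (hstem ▸ hT.2 σ hσ _)

/-- Existence of a weak fan functional `Λ` satisfying `WCF(Λ)`: given `g` and `k`,
`Λ g k` provides a finite list of binary sequences and a bound `N` such that, for
any binary tree `T` avoided by the cylinders `[ᾱᵢ (g αᵢ)]`, some level `n ≤ N` of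
`T` has relative density at most `1/k` (expressed as `k · |Tₙ| ≤ 2ⁿ`). -/
theorem weak_fan_functional_exists :
    ∃ Λ : ((ℕ → ℕ) → ℕ) → ℕ → List (ℕ → ℕ) × ℕ,
      ∀ (g : (ℕ → ℕ) → ℕ) (k : ℕ),
        (∀ α ∈ (Λ g k).1, ∀ n, α n ≤ 1) ∧
        ∀ T : Set (List ℕ), IsBinaryTree T →
          (∀ α ∈ (Λ g k).1, seg α (g α) ∉ T) →
          ∃ n ≤ (Λ g k).2, k * {σ | σ ∈ T ∧ σ.length = n}.ncard ≤ 2 ^ n := by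
  choose s hs using fun g : (ℕ → ℕ) → ℕ => exists_finset_cylinder_cover (g ∘ toBits)
  refine ⟨fun g _ => ((s g).toList.map toBits, (s g).sup (g ∘ toBits)), fun g k => ⟨?_, ?_⟩⟩
  · simp only [List.mem_map, Finset.mem_toList]
    rintro _ ⟨β, -, rfl⟩
    exact toBits_le_one β
  · intro T hT havoid
    have hlevel : {σ | σ ∈ T ∧ σ.length = (s g).sup (g ∘ toBits)} = ∅ :=
      Set.eq_empty_of_forall_notMem fun σ ⟨hσ, hlen⟩ =>
        (hT.length_lt_of_cylinder_cover (hs g)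
          (fun β hβ => havoid _ (List.mem_map_of_mem (Finset.mem_toList.2 hβ))) hσ).ne hlen
    exact ⟨_, le_rfl, by simp [hlevel]⟩
end
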